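/- Let A(s) be the unique formal power series (in x, with coefficients polynomial in s and q) satisfying A(s) = 1 + x·A(1) + xsq·A(s) + (xsq/(1-sq))·(A(1) - A(sq)). Then A(1) = (1/(1-xq))·J(xq)/J(x), where J(x) = Σ_{n≥0} (-x)^n q^{n(n-1)/2} / ((q;q)_n (xq;q)_n). -/

import Mathlib

/-!
Put `a_k = A(q^k)`. As the coefficients of `A` are polynomial in `s`, the functional equation can
be specialised at `s = q^k`; this gives a system linking `a_k` to `a_0` and `a_{k+1}` in which the
`x^{N+1}`-coefficients are determined by the `x^N`-coefficients. So the system has at most one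
solution, and it suffices to exhibit one.

With `J_k(x) = Σ_m (-1)^m q^{km + C(m,2)} x^m / ((q^{k+1};q)_m (xq^{k+1};q)_m)` the summands
telescope: `(1 - q^{k+1})(1 - xq^{k+1}) J_k + q^k x J_{k+1} = (1 - q^{k+1})(1 - xq^{k+1})`.
Substituting `x ↦ xq`, `G_k = J_k(xq) / (1 - xq^{k+1})` satisfies
`(1 - q^{k+1})(1 - xq^{k+1}) G_k + q^{k+1} x G_{k+1} = 1 - q^{k+1}`. Together these show that
`a_k = G_k + q^{-k} (1 - J_k) G_0 / J_0` solves the system, whence `A(1) = G_0 / J_0`.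
-/

open PowerSeries

noncomputable section
namespace FC

/-- The field `ℚ(q)` of rational functions in `q`. -/
abbrev K : Type := RatFunc ℚ

/-- The variable `q`. -/
def q : K := RatFunc.X

/-- The field `ℚ(q)(s)` of rational functions in `s` over `ℚ(q)`. -/
abbrev S : Type := RatFunc K

/-- The variable `s`. -/
def sS : S := RatFunc.X

/-- `q` as an element of `ℚ(q)(s)`. -/
def qS : S := RatFunc.C q

/-- A power series in `x` over `ℚ(q)(s)` has coefficients polynomial in `s`
(and hence in `s` and `q`, up to denominators in `q` alone). -/
def PolyCoeffs (A : PowerSeries S) : Prop :=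
  ∀ n, (PowerSeries.coeff (R := S) n A).denom = 1

/-- Evaluation of a rational function of `s` at `s = 1`. -/
def ev1 (f : S) : K := RatFunc.eval (RingHom.id K) 1 f

/-- `A(1)`: evaluate each coefficient at `s = 1`, giving a power series in `x` over `ℚ(q)`. -/
def atOneK (A : PowerSeries S) : PowerSeries K :=
  PowerSeries.mk fun n => ev1 (PowerSeries.coeff (R := S) n A)

/-- `A(1)`, lifted back to a power series over `ℚ(q)(s)`. -/
def atOne (A : PowerSeries S) : PowerSeries S :=
  PowerSeries.mk fun n => RatFunc.C (ev1 (PowerSeries.coeff (R := S) n A))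

/-- Substitution `s ↦ s·q^j` in each coefficient. -/
def atSq (j : ℕ) (A : PowerSeries S) : PowerSeries S :=
  PowerSeries.mk fun n =>
    RatFunc.eval (RatFunc.C : K →+* S) (RatFunc.C (q ^ j) * RatFunc.X)
      (PowerSeries.coeff (R := S) n A)

/-- The q-Pochhammer symbol `(a; q)_n = ∏_{i=0}^{n-1} (1 - a q^i)` in `ℚ(q)`. -/
def poch (a : K) (n : ℕ) : K := ∏ i ∈ Finset.range n, (1 - a * q ^ i)

/-- The power series `(x q^t; q)_n = ∏_{i=0}^{n-1} (1 - q^{t+i} x)` in the variable `x`. -/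
def pochX (t n : ℕ) : PowerSeries K :=
  ∏ i ∈ Finset.range n, (1 - PowerSeries.C (R := K) (q ^ (t + i)) * PowerSeries.X)

/-- `J(x) = Σ_{n≥0} (-x)^n q^{C(n,2)} / ((q;q)_n (xq;q)_n)`. -/
def J : PowerSeries K :=
  PowerSeries.mk fun N => ∑ n ∈ Finset.range (N + 1),
    ((-1 : K) ^ n * q ^ n.choose 2 / poch q n) * PowerSeries.coeff (R := K) (N - n) (pochX 1 n)⁻¹

section General

open Finset

variable {R : Type*}

theorem _root_.mul_tsum_add_mul_tsum_eq_of_telescoping [Ring R] [TopologicalSpace R]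
    [IsTopologicalRing R] [T2Space R] {F G : ℕ → R} (hF : Summable F) (hG : Summable G)
    {u v : R} (h : ∀ m, u * F (m + 1) + v * G m = 0) :
    u * ∑' m, F m + v * ∑' m, G m = u * F 0 := by
  have hF' : Summable fun m => F (m + 1) := (summable_nat_add_iff 1).mpr hF
  rw [hF.tsum_eq_zero_add, mul_add, ← hF'.tsum_mul_left, ← hG.tsum_mul_left, add_assoc,
    ← (hF'.mul_left u).tsum_add (hG.mul_left v)]
  simp [h]

open scoped PowerSeries.WithPiTopology in
theorem _root_.PowerSeries.hasSum_X_pow_mul [Semiring R] [TopologicalSpace R]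
    (f : ℕ → R⟦X⟧) :
    HasSum (fun m => X ^ m * f m) (mk fun N => ∑ m ∈ range (N + 1), coeff (N - m) (f m)) := by
  rw [WithPiTopology.hasSum_iff_hasSum_coeff]
  intro N
  have hsum : ∑ m ∈ range (N + 1), coeff (N - m) (f m)
      = ∑ m ∈ range (N + 1), coeff N (X ^ m * f m) :=
    sum_congr rfl fun m hm => by
      rw [coeff_X_pow_mul', if_pos (by simpa [Nat.lt_succ_iff] using hm)]
  rw [coeff_mk, hsum]
  exact hasSum_sum_of_ne_finset_zero fun m hm => by
    rw [coeff_X_pow_mul', if_neg (by simpa [Nat.lt_succ_iff] using hm)]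

theorem _root_.PowerSeries.rescale_C [CommSemiring R] (a r : R) : rescale a (C r) = C r := by
  ext n
  rcases n with _ | n <;> simp [coeff_rescale, coeff_C]

theorem _root_.PowerSeries.constantCoeff_one_sub_C_mul_X [Ring R] (a : R) :
    constantCoeff (1 - C a * X) = 1 := by
  simp

theorem _root_.PowerSeries.one_sub_C_mul_X_ne_zero [Ring R] [Nontrivial R] (a : R) :
    (1 - C a * X : R⟦X⟧) ≠ 0 := fun h => by
  simpa [h] using constantCoeff_one_sub_C_mul_X a

theorem _root_.PowerSeries.one_sub_C_mul_X_mul_inv {k : Type*} [Field k] (a : k) :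
    (1 - C a * X) * (1 - C a * X)⁻¹ = 1 :=
  PowerSeries.mul_inv_cancel _ (by simp)

theorem _root_.PowerSeries.eq_zero_of_C_mul_eq_X_mul [Semiring R] [NoZeroDivisors R]
    {d : ℕ → R⟦X⟧} {w α β γ : ℕ → R} (hw : ∀ k, w k ≠ 0)
    (h : ∀ k, C (w k) * d k = X * (C (α k) * d 0 + C (β k) * d k + C (γ k) * d (k + 1))) :
    d = 0 := by
  suffices ∀ N k, coeff N (d k) = 0 from funext fun k => ext fun N => this N k
  intro N
  induction N with
  | zero =>
    intro k
    simpa [hw k] using congrArg (coeff 0) (h k)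
  | succ N ih =>
    intro k
    simpa [coeff_C_mul, ih, hw k] using congrArg (coeff (N + 1)) (h k)

theorem _root_.PowerSeries.map_map {T U : Type*} [Semiring R] [Semiring T] [Semiring U]
    (f : R →+* T) (g : T →+* U) (P : R⟦X⟧) : map g (map f P) = map (g.comp f) P := by
  rw [map_comp]
  rfl

end General

theorem q_ne_zero : q ≠ 0 := RatFunc.X_ne_zero

theorem one_sub_q_pow_succ_ne_zero (j : ℕ) : (1 : K) - q ^ (j + 1) ≠ 0 := by
  intro h
  have h' : algebraMap (Polynomial ℚ) K (Polynomial.X ^ (j + 1))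
      = algebraMap (Polynomial ℚ) K 1 := by
    rw [map_pow, RatFunc.algebraMap_X, map_one, ← q]
    linear_combination -h
  simpa using congrArg (Polynomial.eval 0) (RatFunc.algebraMap_injective ℚ h')

theorem poch_succ (a : K) (m : ℕ) : poch a (m + 1) = (1 - a) * poch (a * q) m := by
  rw [poch, Finset.prod_range_succ', poch, mul_comm]
  simp [pow_succ', mul_assoc]

theorem pochX_succ (t n : ℕ) :
    pochX t (n + 1) = (1 - C (q ^ t) * X) * pochX (t + 1) n := by
  rw [pochX, Finset.prod_range_succ', pochX, mul_comm]
  simp [add_assoc, add_comm 1]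

section JSeries

open scoped PowerSeries.WithPiTopology

-- Gives `∑'` in `K⟦X⟧` a meaning; over a discrete `K` the product topology is `X`-adic.
abbrev instTopologicalSpaceK : TopologicalSpace K := ⊥

attribute [local instance] instTopologicalSpaceK

theorem instDiscreteTopologyK : DiscreteTopology K := ⟨rfl⟩

attribute [local instance] instDiscreteTopologyK

def jCoeff (k m : ℕ) : K := (-1) ^ m * q ^ (k * m + m.choose 2) / poch (q ^ (k + 1)) m

def jTerm (k m : ℕ) : K⟦X⟧ := C (jCoeff k m) * (pochX (k + 1) m)⁻¹

def jSeries (k : ℕ) : K⟦X⟧ := ∑' m, X ^ m * jTerm k m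

theorem jTerm_zero (k : ℕ) : jTerm k 0 = 1 := by
  simp [jTerm, jCoeff, poch, pochX]

theorem one_sub_mul_jCoeff_succ (k m : ℕ) :
    (1 - q ^ (k + 1)) * jCoeff k (m + 1) = -(q ^ k * jCoeff (k + 1) m) := by
  have hchoose : (m + 1).choose 2 = m.choose 2 + m := by
    rw [Nat.choose_succ_succ', Nat.choose_one_right, add_comm]
  rw [jCoeff, jCoeff, poch_succ, ← pow_succ, hchoose,
    show k * (m + 1) + (m.choose 2 + m) = ((k + 1) * m + m.choose 2) + k by ring, pow_add q _ k]
  field_simp [one_sub_q_pow_succ_ne_zero k]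
  ring

theorem jTerm_telescoping (k m : ℕ) :
    C (1 - q ^ (k + 1)) * (1 - C (q ^ (k + 1)) * X) * jTerm k (m + 1)
      + C (q ^ k) * jTerm (k + 1) m = 0 := by
  have hunit := one_sub_C_mul_X_mul_inv (q ^ (k + 1))
  have hcoeff := congrArg C (one_sub_mul_jCoeff_succ k m)
  rw [map_mul, map_neg, map_mul] at hcoeff
  rw [jTerm, jTerm, pochX_succ, PowerSeries.mul_inv_rev]
  linear_combination
    C (1 - q ^ (k + 1)) * C (jCoeff k (m + 1)) * (pochX (k + 1 + 1) m)⁻¹ * hunit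
      + (pochX (k + 1 + 1) m)⁻¹ * hcoeff

theorem jSeries_functional_eq (k : ℕ) :
    C (1 - q ^ (k + 1)) * (1 - C (q ^ (k + 1)) * X) * jSeries k + C (q ^ k) * X * jSeries (k + 1)
      = C (1 - q ^ (k + 1)) * (1 - C (q ^ (k + 1)) * X) := by
  have key := mul_tsum_add_mul_tsum_eq_of_telescoping
    (hasSum_X_pow_mul (jTerm k)).summable (hasSum_X_pow_mul (jTerm (k + 1))).summable
    (u := C (1 - q ^ (k + 1)) * (1 - C (q ^ (k + 1)) * X)) (v := C (q ^ k) * X)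
    fun m => by linear_combination X ^ (m + 1) * jTerm_telescoping k m
  simpa only [jSeries, pow_zero, one_mul, jTerm_zero, mul_one] using key

theorem coeff_jSeries (k N : ℕ) :
    coeff N (jSeries k)
      = ∑ m ∈ Finset.range (N + 1), jCoeff k m * coeff (N - m) (pochX (k + 1) m)⁻¹ := by
  rw [jSeries, (hasSum_X_pow_mul (jTerm k)).tsum_eq, coeff_mk]
  simp [jTerm, coeff_C_mul]

end JSeries

theorem jSeries_zero : jSeries 0 = J := by
  ext N
  simp [coeff_jSeries, J, jCoeff]

theorem constantCoeff_J : constantCoeff J = 1 := by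
  simp [J, poch, pochX]

def gSeries (k : ℕ) : K⟦X⟧ := (1 - C (q ^ (k + 1)) * X)⁻¹ * rescale q (jSeries k)

theorem one_sub_mul_gSeries (k : ℕ) :
    (1 - C (q ^ (k + 1)) * X) * gSeries k = rescale q (jSeries k) := by
  rw [gSeries, ← mul_assoc, one_sub_C_mul_X_mul_inv, one_mul]

theorem rescale_q_C_q_pow_mul_X (j : ℕ) :
    rescale q (C (q ^ j) * X) = C (q ^ (j + 1)) * X := by
  rw [map_mul, rescale_C, rescale_X, ← mul_assoc, ← map_mul, ← pow_succ]

theorem gSeries_functional_eq (k : ℕ) :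
    C (1 - q ^ (k + 1)) * (1 - C (q ^ (k + 1)) * X) * gSeries k
      + C (q ^ (k + 1)) * X * gSeries (k + 1) = C (1 - q ^ (k + 1)) := by
  have h := congrArg (rescale q) (jSeries_functional_eq k)
  rw [map_add, map_mul, map_mul, map_mul, rescale_C, map_sub (rescale q), map_one,
    rescale_q_C_q_pow_mul_X, rescale_q_C_q_pow_mul_X, ← one_sub_mul_gSeries,
    ← one_sub_mul_gSeries] at h
  refine mul_left_cancel₀ (one_sub_C_mul_X_ne_zero (q ^ (k + 1 + 1))) ?_
  linear_combination h

def candidate (k : ℕ) : K⟦X⟧ :=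
  gSeries k + C (q ^ k)⁻¹ * ((1 - jSeries k) * (gSeries 0 * (jSeries 0)⁻¹))

theorem candidate_zero : candidate 0 = gSeries 0 * (jSeries 0)⁻¹ := by
  have hJ : jSeries 0 * (jSeries 0)⁻¹ = 1 :=
    PowerSeries.mul_inv_cancel _ (by simp [jSeries_zero, constantCoeff_J])
  rw [candidate, pow_zero, inv_one, map_one, one_mul]
  linear_combination (-gSeries 0) * hJ

/-- `a k` stands for `A(q^k)`: the functional equation at `s = q^k`, multiplied by `1 - q^{k+1}`. -/
def IsSolution (a : ℕ → K⟦X⟧) : Prop :=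
  ∀ k, C (1 - q ^ (k + 1)) * a k
    = C (1 - q ^ (k + 1)) * (1 + X * a 0 + C (q ^ (k + 1)) * X * a k)
      + C (q ^ (k + 1)) * X * (a 0 - a (k + 1))

theorem isSolution_candidate : IsSolution candidate := by
  intro k
  have hG := gSeries_functional_eq k
  have hJ := jSeries_functional_eq k
  have e₁ : C (q ^ k)⁻¹ * C (q ^ k) = 1 := by
    rw [← map_mul, inv_mul_cancel₀ (pow_ne_zero k q_ne_zero), map_one]
  have e₂ : C (q ^ (k + 1)) * C (q ^ (k + 1))⁻¹ = 1 := by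
    rw [← map_mul, mul_inv_cancel₀ (pow_ne_zero _ q_ne_zero), map_one]
  have e₃ : C (1 - q ^ (k + 1)) + C (q ^ (k + 1)) = 1 := by
    rw [← map_add, sub_add_cancel, map_one]
  rw [candidate_zero, candidate, candidate]
  set B := gSeries 0 * (jSeries 0)⁻¹
  linear_combination hG - C (q ^ k)⁻¹ * B * hJ + X * jSeries (k + 1) * B * e₁
    + X * (1 - jSeries (k + 1)) * B * e₂ - X * B * e₃

theorem IsSolution.unique {a b : ℕ → K⟦X⟧} (ha : IsSolution a) (hb : IsSolution b) :
    a = b := by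
  suffices (fun k => a k - b k) = 0 from funext fun k => sub_eq_zero.mp (congrFun this k)
  refine eq_zero_of_C_mul_eq_X_mul (w := fun k => 1 - q ^ (k + 1)) (α := fun _ => 1)
    (β := fun k => (1 - q ^ (k + 1)) * q ^ (k + 1)) (γ := fun k => -q ^ (k + 1))
    one_sub_q_pow_succ_ne_zero fun k => ?_
  have e : C (1 - q ^ (k + 1)) + C (q ^ (k + 1)) = 1 := by
    rw [← map_add, sub_add_cancel, map_one]
  simp only [map_one, map_mul, map_neg]
  linear_combination ha k - hb k + X * (a 0 - b 0) * e

section Specialize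

open Polynomial (evalRingHom)

variable {A : PowerSeries S}

/-- `A` viewed over `ℚ(q)[s]`; this drops denominators, so it represents `A` only under
`PolyCoeffs A`. -/
def numSeries (A : PowerSeries S) : (Polynomial K)⟦X⟧ := mk fun n => (coeff n A).num

def specialize (c : K) (A : PowerSeries S) : K⟦X⟧ := map (evalRingHom c) (numSeries A)

theorem algebraMap_num_eq (hpoly : PolyCoeffs A) (n : ℕ) :
    algebraMap (Polynomial K) S (coeff n A).num = coeff n A := by
  conv_rhs => rw [← RatFunc.num_div_denom (coeff n A), hpoly n, map_one, div_one]

theorem map_numSeries (hpoly : PolyCoeffs A) :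
    map (algebraMap (Polynomial K) S) (numSeries A) = A := by
  ext n
  rw [coeff_map, numSeries, coeff_mk, algebraMap_num_eq hpoly]

theorem ev1_coeff (hpoly : PolyCoeffs A) (n : ℕ) : ev1 (coeff n A) = (coeff n A).num.eval 1 := by
  conv_lhs => rw [ev1, ← algebraMap_num_eq hpoly, RatFunc.eval_algebraMap]
  rfl

theorem atOneK_eq_specialize (hpoly : PolyCoeffs A) : atOneK A = specialize 1 A := by
  ext n
  rw [atOneK, coeff_mk, ev1_coeff hpoly, specialize, coeff_map, numSeries, coeff_mk,
    Polynomial.coe_evalRingHom]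

theorem map_evalOne_numSeries (hpoly : PolyCoeffs A) :
    map (algebraMap (Polynomial K) S) (map (Polynomial.C.comp (evalRingHom 1)) (numSeries A))
      = atOne A := by
  ext n
  rw [coeff_map, coeff_map, numSeries, coeff_mk, atOne, coeff_mk, ev1_coeff hpoly]
  exact RatFunc.algebraMap_C _

theorem map_comp_numSeries (hpoly : PolyCoeffs A) :
    map (algebraMap (Polynomial K) S)
        (map (Polynomial.compRingHom (Polynomial.C q * Polynomial.X)) (numSeries A))
      = atSq 1 A := by
  have hC : (algebraMap (Polynomial K) S).comp Polynomial.C = RatFunc.C :=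
    RingHom.ext RatFunc.algebraMap_C
  ext n
  rw [coeff_map, coeff_map, numSeries, coeff_mk, atSq, coeff_mk]
  conv_rhs => rw [← algebraMap_num_eq hpoly, RatFunc.eval_algebraMap]
  rw [Polynomial.coe_compRingHom_apply, Polynomial.comp, Polynomial.hom_eval₂, hC, pow_one,
    map_mul, RatFunc.algebraMap_C, RatFunc.algebraMap_X]
  rfl

theorem algebraMap_C_q : algebraMap (Polynomial K) S (Polynomial.C q) = qS :=
  RatFunc.algebraMap_C q

theorem algebraMap_X_eq_sS : algebraMap (Polynomial K) S Polynomial.X = sS := RatFunc.algebraMap_X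

theorem one_sub_sS_mul_qS_ne_zero : (1 : S) - sS * qS ≠ 0 := by
  rw [← algebraMap_C_q, ← algebraMap_X_eq_sS, ← map_mul,
    ← map_one (algebraMap (Polynomial K) S), ← map_sub]
  refine (map_ne_zero_iff _ (RatFunc.algebraMap_injective K)).mpr fun h => ?_
  simpa using congrArg (Polynomial.eval 0) h

theorem numSeries_functional_eq (hpoly : PolyCoeffs A)
    (hA : A = 1 + X * atOne A + C (sS * qS) * X * A
        + C (sS * qS / (1 - sS * qS)) * X * (atOne A - atSq 1 A)) :
    letI s : Polynomial K := Polynomial.C q * Polynomial.X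
    letI P := numSeries A
    letI P₁ := map (Polynomial.C.comp (evalRingHom 1)) P
    C (1 - s) * P = C (1 - s) * (1 + X * P₁ + C s * X * P)
      + C s * X * (P₁ - map (Polynomial.compRingHom s) P) := by
  refine map_injective _ (RatFunc.algebraMap_injective K) ?_
  simp only [map_mul, map_add, map_sub, map_one, map_C, map_X, map_numSeries hpoly,
    map_evalOne_numSeries hpoly, map_comp_numSeries hpoly, algebraMap_C_q, algebraMap_X_eq_sS]
  have hfrac : C (sS * qS / (1 - sS * qS)) * (1 - C qS * C sS) = C qS * C sS := by
    rw [← map_mul, ← map_one C, ← map_sub, ← map_mul, mul_comm qS sS,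
      div_mul_cancel₀ _ one_sub_sS_mul_qS_ne_zero]
  rw [map_mul C sS qS] at hA
  linear_combination (1 - C qS * C sS) * hA + X * (atOne A - atSq 1 A) * hfrac

theorem isSolution_specialize (hpoly : PolyCoeffs A)
    (hA : A = 1 + X * atOne A + C (sS * qS) * X * A
        + C (sS * qS / (1 - sS * qS)) * X * (atOne A - atSq 1 A)) :
    IsSolution fun k => specialize (q ^ k) A := by
  intro k
  have h₁ : (evalRingHom (q ^ k)).comp (Polynomial.C.comp (evalRingHom 1)) = evalRingHom 1 :=
    RingHom.ext fun p => by simp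
  have hσ : (evalRingHom (q ^ k)).comp (Polynomial.compRingHom (Polynomial.C q * Polynomial.X))
      = evalRingHom (q ^ (k + 1)) :=
    RingHom.ext fun p => by simp [Polynomial.eval_comp, pow_succ']
  have h := congrArg (map (evalRingHom (q ^ k))) (numSeries_functional_eq hpoly hA)
  simp only [map_mul, map_add, map_sub, map_one, map_C, map_X, PowerSeries.map_map, h₁, hσ,
    Polynomial.coe_evalRingHom, Polynomial.eval_C, Polynomial.eval_X] at h
  have hq : C q * C (q ^ k) = C (q ^ (k + 1)) := by rw [← map_mul, pow_succ']
  simp only [specialize, pow_zero]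
  rw [map_sub C, map_one, ← hq]
  linear_combination h

end Specialize

theorem candidate_zero_eq_closedForm :
    candidate 0 = (1 - C q * X)⁻¹ * rescale q J * J⁻¹ := by
  rw [candidate_zero, gSeries, jSeries_zero, zero_add, pow_one]

/-- If `A(s)` (a power series in `x` with coefficients polynomial in `s` and `q`) satisfies
`A(s) = 1 + x·A(1) + xsq·A(s) + (xsq/(1-sq))·(A(1) - A(sq))`,
then `A(1) = (1/(1-xq)) · J(xq)/J(x)`. -/
theorem stmt14 (A : PowerSeries S) (hpoly : PolyCoeffs A)
    (hA : A = 1 + PowerSeries.X * atOne A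
        + PowerSeries.C (R := S) (sS * qS) * PowerSeries.X * A
        + PowerSeries.C (R := S) (sS * qS / (1 - sS * qS)) * PowerSeries.X * (atOne A - atSq 1 A)) :
    atOneK A = (1 - PowerSeries.C (R := K) q * PowerSeries.X)⁻¹ * rescale q J * J⁻¹ := by
  have hunique := (isSolution_specialize hpoly hA).unique isSolution_candidate
  calc atOneK A = specialize 1 A := atOneK_eq_specialize hpoly
    _ = candidate 0 := by simpa using congrFun hunique 0
    _ = _ := candidate_zero_eq_closedForm

end FC
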